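/- Let F be a field, p ∈ F nonzero and not a root of unity, λ, ρ₀ ∈ F, and ρ(z) ∈ F[[z]] a formal power series with constant term ρ₀. If a formal power series g(z) ∈ F[[z]] satisfies λ·g(pz) = ρ(z)·g(z) (where g(pz) denotes the series Σ g_n p^n z^n), and λ p^n ≠ ρ₀ for every n ≥ 0, then g = 0. -/

import Mathlib

namespace PowerSeries

theorem coeff_order_mul {R : Type*} [Semiring R] (φ ψ : R⟦X⟧) :
    coeff ψ.order.toNat (φ * ψ) = constantCoeff φ * coeff ψ.order.toNat ψ := by
  rw [coeff_mul, Finset.sum_eq_single_of_mem (0, ψ.order.toNat) (by simp),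
    coeff_zero_eq_constantCoeff_apply]
  rintro ⟨i, j⟩ hij hne
  have hj : j < ψ.order.toNat := by
    rw [Finset.HasAntidiagonal.mem_antidiagonal] at hij
    have hi : i ≠ 0 := by rintro rfl; exact hne (by simp_all)
    omega
  rw [coeff_of_lt_order_toNat j hj, mul_zero]

theorem mul_pow_order_eq_constantCoeff_of_smul_rescale_eq_mul {R : Type*} [CommSemiring R]
    [IsCancelMulZero R] {p lam : R} {ρ g : R⟦X⟧} (heq : lam • rescale p g = ρ * g)
    (hg : g ≠ 0) : lam * p ^ g.order.toNat = constantCoeff ρ := by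
  have hcoeff := congrArg (coeff g.order.toNat) heq
  rw [coeff_smul, coeff_rescale, coeff_order_mul, smul_eq_mul, ← mul_assoc] at hcoeff
  exact mul_right_cancel₀ (coeff_order hg) hcoeff

end PowerSeries

theorem qdiff_power_series_unique_general {F : Type*} [Field F] (p lam ρ₀ : F)
    (ρ g : PowerSeries F) (h0 : PowerSeries.constantCoeff ρ = ρ₀)
    (heq : lam • PowerSeries.rescale p g = ρ * g)
    (hne : ∀ n : ℕ, lam * p ^ n ≠ ρ₀) :
    g = 0 := by
  by_contra hg
  exact hne _ ((PowerSeries.mul_pow_order_eq_constantCoeff_of_smul_rescale_eq_mul heq hg).trans h0)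

/-- If a formal power series `g` over a field satisfies `λ·g(pz) = ρ(z)·g(z)` with
`ρ(0) = ρ₀`, `p` nonzero and not a root of unity, and `λ p^n ≠ ρ₀` for all `n ≥ 0`,
then `g = 0`. -/
theorem qdiff_power_series_unique {F : Type*} [Field F] (p lam ρ₀ : F) (hp : p ≠ 0)
    (hroot : ∀ n : ℕ, 0 < n → p ^ n ≠ 1)
    (ρ g : PowerSeries F) (h0 : PowerSeries.constantCoeff ρ = ρ₀)
    (heq : lam • PowerSeries.rescale p g = ρ * g)
    (hne : ∀ n : ℕ, lam * p ^ n ≠ ρ₀) :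
    g = 0 :=
  qdiff_power_series_unique_general p lam ρ₀ ρ g h0 heq hne
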